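/- Over any field of characteristic 2, the Lie algebras g^6_{010} and g^6_{011} are not isomorphic. -/
import Mathlib


variable (K : Type*) [Field K]

/-- The bracket of the Lie algebra `g^6_{abc}` on `K^6` (indices `0..5` correspond to
`e_1..e_6`): the only nonzero brackets among basis vectors are `⁅e_1, e_{i+1}⁆ = e_i` for
`2 ≤ i ≤ 5`, `⁅e_4, e_5⁆ = a e_2`, `⁅e_4, e_6⁆ = b e_2 + a e_3` and
`⁅e_5, e_6⁆ = c e_2 + b e_3 + a e_4`. -/
def g6b (a b c : K) (x y : Fin 6 → K) : Fin 6 → K :=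
  ![0,
    x 0 * y 2 - x 2 * y 0 + a * (x 3 * y 4 - x 4 * y 3)
      + b * (x 3 * y 5 - x 5 * y 3) + c * (x 4 * y 5 - x 5 * y 4),
    x 0 * y 3 - x 3 * y 0 + a * (x 3 * y 5 - x 5 * y 3) + b * (x 4 * y 5 - x 5 * y 4),
    x 0 * y 4 - x 4 * y 0 + a * (x 4 * y 5 - x 5 * y 4),
    x 0 * y 5 - x 5 * y 0,
    0]

/-- The Lie algebras `g^6_{abc}` and `g^6_{ABC}` are isomorphic: there is a bijective
linear map preserving the brackets. -/
def g6Iso (a b c A B C : K) : Prop :=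
  ∃ f : (Fin 6 → K) ≃ₗ[K] (Fin 6 → K),
    ∀ x y, f (g6b K a b c x y) = g6b K A B C (f x) (f y)

/-- Over any field of characteristic 2, the Lie algebras `g^6_{010}` and `g^6_{011}` are
not isomorphic. -/
theorem stmt7 [CharP K 2] : ¬ g6Iso K 0 1 0 0 1 1 := by
  rintro ⟨f, hf⟩
  have h2 : (2 : K) = 0 := by exact_mod_cast CharP.cast_eq_zero K 2
  set a : Fin 6 → K := f (Pi.single 0 1) with ha
  set bb : Fin 6 → K := f (Pi.single 1 1) with hbb
  set c : Fin 6 → K := f (Pi.single 2 1) with hc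
  set d : Fin 6 → K := f (Pi.single 3 1) with hd
  set g : Fin 6 → K := f (Pi.single 4 1) with hg
  set hh : Fin 6 → K := f (Pi.single 5 1) with hhh
  -- source brackets on basis vectors
  have L13 : g6b K 0 1 0 (Pi.single 0 1) (Pi.single 2 1) = Pi.single 1 1 := by
    funext k; fin_cases k <;> (simp [g6b, Pi.single_apply]; try rfl)
  have L14 : g6b K 0 1 0 (Pi.single 0 1) (Pi.single 3 1) = Pi.single 2 1 := by
    funext k; fin_cases k <;> (simp [g6b, Pi.single_apply]; try rfl)
  have L15 : g6b K 0 1 0 (Pi.single 0 1) (Pi.single 4 1) = Pi.single 3 1 := by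
    funext k; fin_cases k <;> (simp [g6b, Pi.single_apply]; try rfl)
  have L16 : g6b K 0 1 0 (Pi.single 0 1) (Pi.single 5 1) = Pi.single 4 1 := by
    funext k; fin_cases k <;> (simp [g6b, Pi.single_apply]; try rfl)
  have L56 : g6b K 0 1 0 (Pi.single 4 1) (Pi.single 5 1) = Pi.single 2 1 := by
    funext k; fin_cases k <;> (simp [g6b, Pi.single_apply]; try rfl)
  have P13 : bb = g6b K 0 1 1 a c := by
    have := hf (Pi.single 0 1) (Pi.single 2 1); rw [L13] at this; exact this
  have P14 : c = g6b K 0 1 1 a d := by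
    have := hf (Pi.single 0 1) (Pi.single 3 1); rw [L14] at this; exact this
  have P15 : d = g6b K 0 1 1 a g := by
    have := hf (Pi.single 0 1) (Pi.single 4 1); rw [L15] at this; exact this
  have P16 : g = g6b K 0 1 1 a hh := by
    have := hf (Pi.single 0 1) (Pi.single 5 1); rw [L16] at this; exact this
  have P56 : c = g6b K 0 1 1 g hh := by
    have := hf (Pi.single 4 1) (Pi.single 5 1); rw [L56] at this; exact this
  -- component equations
  have b0z : bb 0 = 0 := congrFun P13 0
  have b5z : bb 5 = 0 := congrFun P13 5
  have c0z : c 0 = 0 := congrFun P14 0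
  have c5z : c 5 = 0 := congrFun P14 5
  have d0z : d 0 = 0 := congrFun P15 0
  have d5z : d 5 = 0 := congrFun P15 5
  have g0z : g 0 = 0 := congrFun P16 0
  have g5z : g 5 = 0 := congrFun P16 5
  have d4e : d 4 = a 0 * g 5 - a 5 * g 0 := congrFun P15 4
  have d4z : d 4 = 0 := by linear_combination d4e + a 0 * g5z - a 5 * g0z
  have d3e : d 3 = a 0 * g 4 - a 4 * g 0 + 0 * (a 4 * g 5 - a 5 * g 4) := congrFun P15 3
  have d3c : d 3 = a 0 * g 4 := by linear_combination d3e - a 4 * g0z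
  have d2e : d 2 = a 0 * g 3 - a 3 * g 0 + 0 * (a 3 * g 5 - a 5 * g 3)
      + 1 * (a 4 * g 5 - a 5 * g 4) := congrFun P15 2
  have d2c : d 2 = a 0 * g 3 - a 5 * g 4 := by
    linear_combination d2e - a 3 * g0z + a 4 * g5z
  have g4e : g 4 = a 0 * hh 5 - a 5 * hh 0 := congrFun P16 4
  have g3e : g 3 = a 0 * hh 4 - a 4 * hh 0 + 0 * (a 4 * hh 5 - a 5 * hh 4) := congrFun P16 3
  have c3e : c 3 = a 0 * d 4 - a 4 * d 0 + 0 * (a 4 * d 5 - a 5 * d 4) := congrFun P14 3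
  have c3z : c 3 = 0 := by linear_combination c3e + a 0 * d4z - a 4 * d0z
  have c2e : c 2 = a 0 * d 3 - a 3 * d 0 + 0 * (a 3 * d 5 - a 5 * d 3)
      + 1 * (a 4 * d 5 - a 5 * d 4) := congrFun P14 2
  have c2c : c 2 = a 0 ^ 2 * g 4 := by
    linear_combination c2e - a 3 * d0z + a 4 * d5z - a 5 * d4z + a 0 * d3c
  have c1e : c 1 = a 0 * d 2 - a 2 * d 0 + 0 * (a 3 * d 4 - a 4 * d 3)
      + 1 * (a 3 * d 5 - a 5 * d 3) + 1 * (a 4 * d 5 - a 5 * d 4) := congrFun P14 1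
  have c1cc : c 1 = a 0 ^ 2 * g 3 := by
    linear_combination c1e - a 2 * d0z + a 3 * d5z + a 4 * d5z - a 5 * d4z
      + a 0 * d2c - a 5 * d3c - (a 0 * a 5 * g 4) * h2
  have c3e' : c 3 = g 0 * hh 4 - g 4 * hh 0 + 0 * (g 4 * hh 5 - g 5 * hh 4) := congrFun P56 3
  have hX : g 4 * hh 0 = 0 := by linear_combination c3e' - c3z + hh 4 * g0z
  have c2e' : c 2 = g 0 * hh 3 - g 3 * hh 0 + 0 * (g 3 * hh 5 - g 5 * hh 3)
      + 1 * (g 4 * hh 5 - g 5 * hh 4) := congrFun P56 2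
  have c1e' : c 1 = g 0 * hh 2 - g 2 * hh 0 + 0 * (g 3 * hh 4 - g 4 * hh 3)
      + 1 * (g 3 * hh 5 - g 5 * hh 3) + 1 * (g 4 * hh 5 - g 5 * hh 4) := congrFun P56 1
  -- expansion of f in terms of the rows
  have hexp : ∀ v : Fin 6 → K,
      f v = v 0 • a + v 1 • bb + v 2 • c + v 3 • d + v 4 • g + v 5 • hh := by
    intro v
    have hv : v = v 0 • (Pi.single 0 1 : Fin 6 → K) + v 1 • (Pi.single 1 1 : Fin 6 → K)
        + v 2 • (Pi.single 2 1 : Fin 6 → K) + v 3 • (Pi.single 3 1 : Fin 6 → K)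
        + v 4 • (Pi.single 4 1 : Fin 6 → K) + v 5 • (Pi.single 5 1 : Fin 6 → K) := by
      funext k; fin_cases k <;> simp [Pi.single_apply]
    conv_lhs => rw [hv]
    simp [map_add, map_smul, ha, hbb, hc, hd, hg, hhh]
  set y : Fin 6 → K := f.symm (Pi.single 0 1) with hy
  set z : Fin 6 → K := f.symm (Pi.single 5 1) with hz
  have hfy : f y = Pi.single 0 1 := f.apply_symm_apply _
  have hfz : f z = Pi.single 5 1 := f.apply_symm_apply _
  have hY := (hexp y).symm.trans hfy
  have hZ := (hexp z).symm.trans hfz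
  have Y0' := congrFun hY 0
  have Y5' := congrFun hY 5
  have Z0' := congrFun hZ 0
  have Z5' := congrFun hZ 5
  simp [Pi.single_apply] at Y0' Y5' Z0' Z5'
  have Y0c : y 0 * a 0 + y 5 * hh 0 = 1 := by
    linear_combination Y0' - y 1 * b0z - y 2 * c0z - y 3 * d0z - y 4 * g0z
  have Y5c : y 0 * a 5 + y 5 * hh 5 = 0 := by
    linear_combination Y5' - y 1 * b5z - y 2 * c5z - y 3 * d5z - y 4 * g5z
  have Z0c : z 0 * a 0 + z 5 * hh 0 = 0 := by
    linear_combination Z0' - z 1 * b0z - z 2 * c0z - z 3 * d0z - z 4 * g0z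
  have Z5c : z 0 * a 5 + z 5 * hh 5 = 1 := by
    linear_combination Z5' - z 1 * b5z - z 2 * c5z - z 3 * d5z - z 4 * g5z
  have hq : (a 0 * hh 5 - a 5 * hh 0) * (y 0 * z 5 - y 5 * z 0) = 1 := by
    linear_combination (z 0 * a 5 + z 5 * hh 5) * Y0c + Z5c
      - (y 0 * a 5 + y 5 * hh 5) * Z0c
  rw [← g4e] at hq
  have hg4 : g 4 ≠ 0 := by
    intro h0; rw [h0, zero_mul] at hq; exact zero_ne_one hq
  have hh0z : hh 0 = 0 := by
    rcases mul_eq_zero.mp hX with h | h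
    · exact absurd h hg4
    · exact h
  have hE : a 0 ^ 2 * g 4 = g 4 * hh 5 := by
    linear_combination c2e' - c2c + hh 3 * g0z - g 3 * hh0z - hh 4 * g5z
  have hh5e : hh 5 = a 0 ^ 2 := mul_right_cancel₀ hg4 (by linear_combination -hE)
  have hg4e : g 4 = a 0 ^ 3 := by linear_combination g4e + a 0 * hh5e - a 5 * hh0z
  have ha0 : a 0 ≠ 0 := by
    intro h0; rw [hg4e, h0] at hq; norm_num at hq
  have g3c : g 3 = a 0 * hh 4 := by linear_combination g3e - a 4 * hh0z
  have key : a 0 ^ 5 = 0 := by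
    linear_combination c1cc - c1e' - hh 2 * g0z + g 2 * hh0z + hh 3 * g5z + hh 4 * g5z
      + (a 0 ^ 2 - hh 5) * g3c - hh 5 * hg4e - a 0 ^ 3 * hh5e - a 0 * hh 4 * hh5e
  exact ha0 (pow_eq_zero_iff (by norm_num : (5:ℕ) ≠ 0) |>.mp key)
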